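/- arXiv:2203.08229 — 3 statements merged into one kernel-verified Lean document; each statement's English description precedes it below -/
import Mathlib

section
/- Let X be a Banach space, let ε > 0, and let e_1, e_2, e_3, e_4 be vectors in the closed unit ball of X such that ‖e_1 + ⋯ + e_j − e_{j+1} − ⋯ − e_4‖ ≥ 4 − ε for every 1 ≤ j ≤ 4. Define f : 𝓛_1 → X by f(A) = 0, f(T) = e_1, f(L) = e_1 + e_2, f(R) = e_1 + e_3, f(B) = e_1 + e_2 + e_3, f(U) = e_1 + e_2 + e_3 + e_4. Then for all vertices a, b of 𝓛_1: d(a,b) − ε ≤ ‖f(a) − f(b)‖ ≤ d(a,b), where d is the shortest-path metric on 𝓛_1. -/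
/-- A graph presented by an (oriented) edge family with source and target maps. -/
structure PreGraph where
  V : Type
  E : Type
  s : E → V
  t : E → V

/-- Replace every edge `uv` of `G` by a copy of the six-vertex Laakso gadget `𝓛₁`
with vertices `u = A, T, L, R, B, U = v` and edges `AT, TL, TR, LB, RB, BU`.
The four new internal vertices per edge are indexed by `Fin 4` as `0 = T`,
`1 = L`, `2 = R`, `3 = B`. -/
def laaksoStep (G : PreGraph) : PreGraph where
  V := G.V ⊕ (G.E × Fin 4)
  E := G.E × Fin 6
  s := fun p => ![Sum.inl (G.s p.1), Sum.inr (p.1, 0), Sum.inr (p.1, 0),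
                  Sum.inr (p.1, 1), Sum.inr (p.1, 2), Sum.inr (p.1, 3)] p.2
  t := fun p => ![Sum.inr (p.1, 0), Sum.inr (p.1, 1), Sum.inr (p.1, 2),
                  Sum.inr (p.1, 3), Sum.inr (p.1, 3), Sum.inl (G.t p.1)] p.2

/-- The Laakso graph `𝓛ₙ`: `𝓛₀` is a single edge, and `𝓛ₙ` is obtained from
`𝓛ₙ₋₁` by replacing each edge by a copy of the gadget `𝓛₁`. -/
def laaksoPre : ℕ → PreGraph
  | 0 => ⟨Fin 2, Fin 1, fun _ => 0, fun _ => 1⟩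
  | n + 1 => laaksoStep (laaksoPre n)

/-- The Laakso graph `𝓛ₙ` as a simple graph on its vertex set. -/
def laaksoGraph (n : ℕ) : SimpleGraph (laaksoPre n).V :=
  SimpleGraph.fromRel (fun u v => ∃ e, (laaksoPre n).s e = u ∧ (laaksoPre n).t e = v)

/-- The shortest-path metric on the Laakso graph `𝓛ₙ`, as a real number. -/
noncomputable def laaksoDist (n : ℕ) (a b : (laaksoPre n).V) : ℝ :=
  ((laaksoGraph n).dist a b : ℝ)

open Finset


private def vA : (laaksoPre 1).V := Sum.inl (0 : Fin 2)
private def vU : (laaksoPre 1).V := Sum.inl (1 : Fin 2)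
private def vT : (laaksoPre 1).V := Sum.inr ((0 : Fin 1), 0)
private def vL : (laaksoPre 1).V := Sum.inr ((0 : Fin 1), 1)
private def vR : (laaksoPre 1).V := Sum.inr ((0 : Fin 1), 2)
private def vB : (laaksoPre 1).V := Sum.inr ((0 : Fin 1), 3)

private lemma adj_of_edge (e : (laaksoPre 1).E) (h : (laaksoPre 1).s e ≠ (laaksoPre 1).t e) :
    (laaksoGraph 1).Adj ((laaksoPre 1).s e) ((laaksoPre 1).t e) := by
  rw [laaksoGraph, SimpleGraph.fromRel_adj]
  exact ⟨h, Or.inl ⟨e, rfl, rfl⟩⟩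

instance : DecidableEq (laaksoPre 1).V := show DecidableEq (Fin 2 ⊕ (Fin 1 × Fin 4)) from inferInstance

private lemma adjAT : (laaksoGraph 1).Adj vA vT := adj_of_edge ((0:Fin 1), 0) (by decide)
private lemma adjTL : (laaksoGraph 1).Adj vT vL := adj_of_edge ((0:Fin 1), 1) (by decide)
private lemma adjTR : (laaksoGraph 1).Adj vT vR := adj_of_edge ((0:Fin 1), 2) (by decide)
private lemma adjLB : (laaksoGraph 1).Adj vL vB := adj_of_edge ((0:Fin 1), 3) (by decide)
private lemma adjRB : (laaksoGraph 1).Adj vR vB := adj_of_edge ((0:Fin 1), 4) (by decide)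
private lemma adjBU : (laaksoGraph 1).Adj vB vU := adj_of_edge ((0:Fin 1), 5) (by decide)

private lemma abs_lip_walk {V : Type} {G : SimpleGraph V} (g : V → ℝ)
    (hg : ∀ u v, G.Adj u v → |g u - g v| ≤ 1) :
    ∀ {a b : V} (p : G.Walk a b), |g a - g b| ≤ p.length := by
  intro a b p
  induction p with
  | nil => simp
  | @cons u v w h p ih =>
    have h1 := hg u v h
    have h2 := abs_sub_le (g u) (g v) (g w)
    simp only [SimpleGraph.Walk.length_cons]
    push_cast
    linarith

private lemma dist_le_of_walk {a b : (laaksoPre 1).V} (p : (laaksoGraph 1).Walk a b) (n : ℕ)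
    (hn : p.length = n) : laaksoDist 1 a b ≤ n := by
  unfold laaksoDist
  exact_mod_cast hn ▸ SimpleGraph.dist_le p

private lemma le_dist_of_lip (g : (laaksoPre 1).V → ℝ)
    (hg : ∀ u v, (laaksoGraph 1).Adj u v → |g u - g v| ≤ 1)
    {a b : (laaksoPre 1).V} (p : (laaksoGraph 1).Walk a b) :
    |g a - g b| ≤ laaksoDist 1 a b := by
  obtain ⟨q, hq⟩ := p.reachable.exists_walk_length_eq_dist
  unfold laaksoDist
  rw [← hq]
  exact_mod_cast abs_lip_walk g hg q

private lemma lip_of_edges (g : (laaksoPre 1).V → ℝ)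
    (h : ∀ e, |g ((laaksoPre 1).s e) - g ((laaksoPre 1).t e)| ≤ 1) :
    ∀ u v, (laaksoGraph 1).Adj u v → |g u - g v| ≤ 1 := by
  intro u v huv
  rw [laaksoGraph, SimpleGraph.fromRel_adj] at huv
  obtain ⟨-, ⟨e, rfl, rfl⟩ | ⟨e, rfl, rfl⟩⟩ := huv
  · exact h e
  · rw [abs_sub_comm]; exact h e

private noncomputable def g1 : (laaksoPre 1).V → ℝ :=
  Sum.elim (fun i => ![0, 4] i) (fun p => ![1, 2, 2, 3] p.2)

private noncomputable def g2 : (laaksoPre 1).V → ℝ :=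
  Sum.elim (fun i => ![2, 2] i) (fun p => ![1, 0, 2, 1] p.2)

private lemma g1_edges : ∀ e : Fin 1 × Fin 6,
    |g1 ((laaksoPre 1).s e) - g1 ((laaksoPre 1).t e)| ≤ 1 := by
  intro ⟨e1, e2⟩
  fin_cases e1 <;> fin_cases e2 <;>
    simp [g1, laaksoPre, laaksoStep, show ((5:Fin 6)) = Fin.succ 4 from rfl,
      Matrix.cons_val_succ] <;> norm_num

private lemma g2_edges : ∀ e : Fin 1 × Fin 6,
    |g2 ((laaksoPre 1).s e) - g2 ((laaksoPre 1).t e)| ≤ 1 := by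
  intro ⟨e1, e2⟩
  fin_cases e1 <;> fin_cases e2 <;>
    simp [g2, laaksoPre, laaksoStep, show ((5:Fin 6)) = Fin.succ 4 from rfl,
      Matrix.cons_val_succ] <;> norm_num

private lemma g1_lip : ∀ u v, (laaksoGraph 1).Adj u v → |g1 u - g1 v| ≤ 1 :=
  lip_of_edges g1 (fun e => g1_edges e)

private lemma g2_lip : ∀ u v, (laaksoGraph 1).Adj u v → |g2 u - g2 v| ≤ 1 :=
  lip_of_edges g2 (fun e => g2_edges e)

open SimpleGraph.Walk in
private def pAT : (laaksoGraph 1).Walk vA vT := adjAT.toWalk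
open SimpleGraph.Walk in
private def pAL : (laaksoGraph 1).Walk vA vL := cons adjAT adjTL.toWalk
open SimpleGraph.Walk in
private def pAR : (laaksoGraph 1).Walk vA vR := cons adjAT adjTR.toWalk
open SimpleGraph.Walk in
private def pAB : (laaksoGraph 1).Walk vA vB := cons adjAT (cons adjTL adjLB.toWalk)
open SimpleGraph.Walk in
private def pAU : (laaksoGraph 1).Walk vA vU := cons adjAT (cons adjTL (cons adjLB adjBU.toWalk))
open SimpleGraph.Walk in
private def pTL : (laaksoGraph 1).Walk vT vL := adjTL.toWalk
open SimpleGraph.Walk in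
private def pTR : (laaksoGraph 1).Walk vT vR := adjTR.toWalk
open SimpleGraph.Walk in
private def pTB : (laaksoGraph 1).Walk vT vB := cons adjTL adjLB.toWalk
open SimpleGraph.Walk in
private def pTU : (laaksoGraph 1).Walk vT vU := cons adjTL (cons adjLB adjBU.toWalk)
open SimpleGraph.Walk in
private def pLR : (laaksoGraph 1).Walk vL vR := cons adjTL.symm adjTR.toWalk
open SimpleGraph.Walk in
private def pLB : (laaksoGraph 1).Walk vL vB := adjLB.toWalk
open SimpleGraph.Walk in
private def pLU : (laaksoGraph 1).Walk vL vU := cons adjLB adjBU.toWalk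
open SimpleGraph.Walk in
private def pRB : (laaksoGraph 1).Walk vR vB := adjRB.toWalk
open SimpleGraph.Walk in
private def pRU : (laaksoGraph 1).Walk vR vU := cons adjRB adjBU.toWalk
open SimpleGraph.Walk in
private def pBU : (laaksoGraph 1).Walk vB vU := adjBU.toWalk

private lemma dist_eq_of {a b : (laaksoPre 1).V} (n : ℕ) (p : (laaksoGraph 1).Walk a b)
    (hp : p.length = n) (g : (laaksoPre 1).V → ℝ)
    (hg : ∀ u v, (laaksoGraph 1).Adj u v → |g u - g v| ≤ 1)
    (hgv : |g a - g b| = n) : laaksoDist 1 a b = n := by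
  have h := le_dist_of_lip g hg p
  have h2 := dist_le_of_walk p n hp
  rw [hgv] at h
  linarith

private lemma dAT : laaksoDist 1 vA vT = 1 :=
  by exact_mod_cast dist_eq_of 1 pAT rfl g1 g1_lip (by simp [g1, vA, vT, Sum.elim, Matrix.cons_val] <;> norm_num)
private lemma dAL : laaksoDist 1 vA vL = 2 :=
  by exact_mod_cast dist_eq_of 2 pAL rfl g1 g1_lip (by simp [g1, vA, vL, Sum.elim, Matrix.cons_val] <;> norm_num)
private lemma dAR : laaksoDist 1 vA vR = 2 :=
  by exact_mod_cast dist_eq_of 2 pAR rfl g1 g1_lip (by simp [g1, vA, vR, Sum.elim, Matrix.cons_val] <;> norm_num)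
private lemma dAB : laaksoDist 1 vA vB = 3 :=
  by exact_mod_cast dist_eq_of 3 pAB rfl g1 g1_lip (by simp [g1, vA, vB, Sum.elim, Matrix.cons_val] <;> norm_num)
private lemma dAU : laaksoDist 1 vA vU = 4 :=
  by exact_mod_cast dist_eq_of 4 pAU rfl g1 g1_lip (by simp [g1, vA, vU, Sum.elim, Matrix.cons_val] <;> norm_num)
private lemma dTL : laaksoDist 1 vT vL = 1 :=
  by exact_mod_cast dist_eq_of 1 pTL rfl g1 g1_lip (by simp [g1, vT, vL, Sum.elim, Matrix.cons_val] <;> norm_num)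
private lemma dTR : laaksoDist 1 vT vR = 1 :=
  by exact_mod_cast dist_eq_of 1 pTR rfl g1 g1_lip (by simp [g1, vT, vR, Sum.elim, Matrix.cons_val] <;> norm_num)
private lemma dTB : laaksoDist 1 vT vB = 2 :=
  by exact_mod_cast dist_eq_of 2 pTB rfl g1 g1_lip (by simp [g1, vT, vB, Sum.elim, Matrix.cons_val] <;> norm_num)
private lemma dTU : laaksoDist 1 vT vU = 3 :=
  by exact_mod_cast dist_eq_of 3 pTU rfl g1 g1_lip (by simp [g1, vT, vU, Sum.elim, Matrix.cons_val] <;> norm_num)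
private lemma dLR : laaksoDist 1 vL vR = 2 :=
  by exact_mod_cast dist_eq_of 2 pLR rfl g2 g2_lip (by simp [g2, vL, vR, Sum.elim, Matrix.cons_val] <;> norm_num)
private lemma dLB : laaksoDist 1 vL vB = 1 :=
  by exact_mod_cast dist_eq_of 1 pLB rfl g1 g1_lip (by simp [g1, vL, vB, Sum.elim, Matrix.cons_val] <;> norm_num)
private lemma dLU : laaksoDist 1 vL vU = 2 :=
  by exact_mod_cast dist_eq_of 2 pLU rfl g1 g1_lip (by simp [g1, vL, vU, Sum.elim, Matrix.cons_val] <;> norm_num)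
private lemma dRB : laaksoDist 1 vR vB = 1 :=
  by exact_mod_cast dist_eq_of 1 pRB rfl g1 g1_lip (by simp [g1, vR, vB, Sum.elim, Matrix.cons_val] <;> norm_num)
private lemma dRU : laaksoDist 1 vR vU = 2 :=
  by exact_mod_cast dist_eq_of 2 pRU rfl g1 g1_lip (by simp [g1, vR, vU, Sum.elim, Matrix.cons_val] <;> norm_num)
private lemma dBU : laaksoDist 1 vB vU = 1 :=
  by exact_mod_cast dist_eq_of 1 pBU rfl g1 g1_lip (by simp [g1, vB, vU, Sum.elim, Matrix.cons_val] <;> norm_num)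

private lemma dist_symm (a b : (laaksoPre 1).V) : laaksoDist 1 a b = laaksoDist 1 b a := by
  unfold laaksoDist; rw [SimpleGraph.dist_comm]

private lemma dist_self' (a : (laaksoPre 1).V) : laaksoDist 1 a a = 0 := by
  unfold laaksoDist; rw [SimpleGraph.dist_self]; norm_num

private lemma vertex_cases (a : (laaksoPre 1).V) :
    a = vA ∨ a = vU ∨ a = vT ∨ a = vL ∨ a = vR ∨ a = vB := by
  rcases a with ⟨iv, hlt⟩ | ⟨⟨ev, helt⟩, i2⟩
  · interval_cases iv
    · exact Or.inl rfl
    · exact Or.inr (Or.inl rfl)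
  · interval_cases ev
    fin_cases i2
    · exact Or.inr (Or.inr (Or.inl rfl))
    · exact Or.inr (Or.inr (Or.inr (Or.inl rfl)))
    · exact Or.inr (Or.inr (Or.inr (Or.inr (Or.inl rfl))))
    · exact Or.inr (Or.inr (Or.inr (Or.inr (Or.inr rfl))))

/-- **Base case of Theorem 1.** If `e₁, e₂, e₃, e₄` are in the closed unit ball of `X`
with `‖e₁ + ⋯ + e_j − e_{j+1} − ⋯ − e₄‖ ≥ 4 − ε` for each `1 ≤ j ≤ 4`, then the map
`f(A) = 0, f(T) = e₁, f(L) = e₁ + e₂, f(R) = e₁ + e₃, f(B) = e₁ + e₂ + e₃,`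
`f(U) = e₁ + e₂ + e₃ + e₄` satisfies `d(a,b) − ε ≤ ‖f a − f b‖ ≤ d(a,b)` on `𝓛₁`.
(In `laaksoPre 1`, the vertex `A` is `Sum.inl 0`, `U` is `Sum.inl 1`, and the internal
vertices `T, L, R, B` are `Sum.inr (e, 0), …, Sum.inr (e, 3)`.) -/
theorem laakso_stmt10 {X : Type*} [NormedAddCommGroup X] [NormedSpace ℝ X] [CompleteSpace X]
    (ε : ℝ) (hε : 0 < ε) (e : Fin 4 → X) (he : ∀ i, ‖e i‖ ≤ 1)
    (hJ : ∀ j : Fin 4,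
      ‖(∑ i ∈ Finset.univ.filter (fun i => i ≤ j), e i)
        - ∑ i ∈ Finset.univ.filter (fun i => j < i), e i‖ ≥ (4 : ℝ) - ε)
    (f : (laaksoPre 1).V → X)
    (hf : f = Sum.elim
      (fun i => ![(0 : X), e 0 + e 1 + e 2 + e 3] i)
      (fun p => ![e 0, e 0 + e 1, e 0 + e 2, e 0 + e 1 + e 2] p.2)) :
    ∀ a b : (laaksoPre 1).V,
      laaksoDist 1 a b - ε ≤ ‖f a - f b‖ ∧ ‖f a - f b‖ ≤ laaksoDist 1 a b := by
  have h3' := hJ 3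
  have h1' := hJ 1
  simp (config := { decide := true }) only [Finset.sum_filter, Fin.sum_univ_four] at h3' h1'
  have H3 : (4:ℝ) - ε ≤ ‖e 0 + e 1 + e 2 + e 3‖ := by
    rw [show e 0 + e 1 + e 2 + e 3 = e 0 + e 1 + e 2 + e 3 - (0+0+0+0) from by abel]; exact h3'
  have H1 : (4:ℝ) - ε ≤ ‖e 0 + e 1 - e 2 - e 3‖ := by
    rw [show e 0 + e 1 - e 2 - e 3 = e 0 + e 1 + 0 + 0 - (0 + 0 + e 2 + e 3) from by abel]
    exact h1'
  have hu01 : ‖e 0 + e 1‖ ≤ 2 := le_trans (norm_add_le _ _) (by linarith [he 0, he 1])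
  have hu02 : ‖e 0 + e 2‖ ≤ 2 := le_trans (norm_add_le _ _) (by linarith [he 0, he 2])
  have hu03 : ‖e 0 + e 3‖ ≤ 2 := le_trans (norm_add_le _ _) (by linarith [he 0, he 3])
  have hu12 : ‖e 1 + e 2‖ ≤ 2 := le_trans (norm_add_le _ _) (by linarith [he 1, he 2])
  have hu13 : ‖e 1 + e 3‖ ≤ 2 := le_trans (norm_add_le _ _) (by linarith [he 1, he 3])
  have hu23 : ‖e 2 + e 3‖ ≤ 2 := le_trans (norm_add_le _ _) (by linarith [he 2, he 3])
  have huLR : ‖e 1 - e 2‖ ≤ 2 := le_trans (norm_sub_le _ _) (by linarith [he 1, he 2])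
  have huD03 : ‖e 0 - e 3‖ ≤ 2 := le_trans (norm_sub_le _ _) (by linarith [he 0, he 3])
  have hu012 : ‖e 0 + e 1 + e 2‖ ≤ 3 := le_trans (norm_add_le _ _) (by linarith [hu01, he 2])
  have hu013 : ‖e 0 + e 1 + e 3‖ ≤ 3 := le_trans (norm_add_le _ _) (by linarith [hu01, he 3])
  have hu023 : ‖e 0 + e 2 + e 3‖ ≤ 3 := le_trans (norm_add_le _ _) (by linarith [hu02, he 3])
  have hu123 : ‖e 1 + e 2 + e 3‖ ≤ 3 := le_trans (norm_add_le _ _) (by linarith [hu12, he 3])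
  have hu0123 : ‖e 0 + e 1 + e 2 + e 3‖ ≤ 4 :=
    le_trans (norm_add_le _ _) (by linarith [hu012, he 3])
  have n0 : (1:ℝ) - ε ≤ ‖e 0‖ := by
    have h := norm_add_le (e 0) (e 1 + e 2 + e 3)
    rw [show e 0 + (e 1 + e 2 + e 3) = e 0 + e 1 + e 2 + e 3 from by abel] at h
    linarith [hu123]
  have n1 : (1:ℝ) - ε ≤ ‖e 1‖ := by
    have h := norm_add_le (e 1) (e 0 + e 2 + e 3)
    rw [show e 1 + (e 0 + e 2 + e 3) = e 0 + e 1 + e 2 + e 3 from by abel] at h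
    linarith [hu023]
  have n2 : (1:ℝ) - ε ≤ ‖e 2‖ := by
    have h := norm_add_le (e 2) (e 0 + e 1 + e 3)
    rw [show e 2 + (e 0 + e 1 + e 3) = e 0 + e 1 + e 2 + e 3 from by abel] at h
    linarith [hu013]
  have n3 : (1:ℝ) - ε ≤ ‖e 3‖ := by
    have h := norm_add_le (e 3) (e 0 + e 1 + e 2)
    rw [show e 3 + (e 0 + e 1 + e 2) = e 0 + e 1 + e 2 + e 3 from by abel] at h
    linarith [hu012]
  have n01 : (2:ℝ) - ε ≤ ‖e 0 + e 1‖ := by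
    have h := norm_add_le (e 0 + e 1) (e 2 + e 3)
    rw [show e 0 + e 1 + (e 2 + e 3) = e 0 + e 1 + e 2 + e 3 from by abel] at h
    linarith [hu23]
  have n02 : (2:ℝ) - ε ≤ ‖e 0 + e 2‖ := by
    have h := norm_add_le (e 0 + e 2) (e 1 + e 3)
    rw [show e 0 + e 2 + (e 1 + e 3) = e 0 + e 1 + e 2 + e 3 from by abel] at h
    linarith [hu13]
  have n12 : (2:ℝ) - ε ≤ ‖e 1 + e 2‖ := by
    have h := norm_add_le (e 1 + e 2) (e 0 + e 3)
    rw [show e 1 + e 2 + (e 0 + e 3) = e 0 + e 1 + e 2 + e 3 from by abel] at h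
    linarith [hu03]
  have n13 : (2:ℝ) - ε ≤ ‖e 1 + e 3‖ := by
    have h := norm_add_le (e 1 + e 3) (e 0 + e 2)
    rw [show e 1 + e 3 + (e 0 + e 2) = e 0 + e 1 + e 2 + e 3 from by abel] at h
    linarith [hu02]
  have n23 : (2:ℝ) - ε ≤ ‖e 2 + e 3‖ := by
    have h := norm_add_le (e 2 + e 3) (e 0 + e 1)
    rw [show e 2 + e 3 + (e 0 + e 1) = e 0 + e 1 + e 2 + e 3 from by abel] at h
    linarith [hu01]
  have nLR : (2:ℝ) - ε ≤ ‖e 1 - e 2‖ := by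
    have h := norm_add_le (e 1 - e 2) (e 0 - e 3)
    rw [show e 1 - e 2 + (e 0 - e 3) = e 0 + e 1 - e 2 - e 3 from by abel] at h
    linarith [huD03]
  have n012 : (3:ℝ) - ε ≤ ‖e 0 + e 1 + e 2‖ := by
    have h := norm_add_le (e 0 + e 1 + e 2) (e 3)
    linarith [he 3]
  have n123 : (3:ℝ) - ε ≤ ‖e 1 + e 2 + e 3‖ := by
    have h := norm_add_le (e 1 + e 2 + e 3) (e 0)
    rw [show e 1 + e 2 + e 3 + e 0 = e 0 + e 1 + e 2 + e 3 from by abel] at h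
    linarith [he 0]
  have fA : f vA = 0 := by rw [hf]; rfl
  have fT : f vT = e 0 := by rw [hf]; rfl
  have fL : f vL = e 0 + e 1 := by rw [hf]; rfl
  have fR : f vR = e 0 + e 2 := by rw [hf]; rfl
  have fB : f vB = e 0 + e 1 + e 2 := by rw [hf]; rfl
  have fU : f vU = e 0 + e 1 + e 2 + e 3 := by rw [hf]; rfl
  intro a b
  rcases vertex_cases a with rfl|rfl|rfl|rfl|rfl|rfl <;>
    rcases vertex_cases b with rfl|rfl|rfl|rfl|rfl|rfl
  · rw [dist_self', sub_self, norm_zero]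
    exact ⟨by linarith, le_rfl⟩
  · rw [fA, fU, dAU, show (0:X) - (e 0 + e 1 + e 2 + e 3) = -(e 0 + e 1 + e 2 + e 3) from by abel, norm_neg]
    exact ⟨by linarith [H3], by linarith [hu0123]⟩
  · rw [fA, fT, dAT, show (0:X) - (e 0) = -(e 0) from by abel, norm_neg]
    exact ⟨by linarith [n0], by linarith [he 0]⟩
  · rw [fA, fL, dAL, show (0:X) - (e 0 + e 1) = -(e 0 + e 1) from by abel, norm_neg]
    exact ⟨by linarith [n01], by linarith [hu01]⟩
  · rw [fA, fR, dAR, show (0:X) - (e 0 + e 2) = -(e 0 + e 2) from by abel, norm_neg]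
    exact ⟨by linarith [n02], by linarith [hu02]⟩
  · rw [fA, fB, dAB, show (0:X) - (e 0 + e 1 + e 2) = -(e 0 + e 1 + e 2) from by abel, norm_neg]
    exact ⟨by linarith [n012], by linarith [hu012]⟩
  · rw [fU, fA, dist_symm vU vA, dAU, show e 0 + e 1 + e 2 + e 3 - ((0:X)) = e 0 + e 1 + e 2 + e 3 from by abel]
    exact ⟨by linarith [H3], by linarith [hu0123]⟩
  · rw [dist_self', sub_self, norm_zero]
    exact ⟨by linarith, le_rfl⟩
  · rw [fU, fT, dist_symm vU vT, dTU, show e 0 + e 1 + e 2 + e 3 - (e 0) = e 1 + e 2 + e 3 from by abel]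
    exact ⟨by linarith [n123], by linarith [hu123]⟩
  · rw [fU, fL, dist_symm vU vL, dLU, show e 0 + e 1 + e 2 + e 3 - (e 0 + e 1) = e 2 + e 3 from by abel]
    exact ⟨by linarith [n23], by linarith [hu23]⟩
  · rw [fU, fR, dist_symm vU vR, dRU, show e 0 + e 1 + e 2 + e 3 - (e 0 + e 2) = e 1 + e 3 from by abel]
    exact ⟨by linarith [n13], by linarith [hu13]⟩
  · rw [fU, fB, dist_symm vU vB, dBU, show e 0 + e 1 + e 2 + e 3 - (e 0 + e 1 + e 2) = e 3 from by abel]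
    exact ⟨by linarith [n3], by linarith [he 3]⟩
  · rw [fT, fA, dist_symm vT vA, dAT, show e 0 - ((0:X)) = e 0 from by abel]
    exact ⟨by linarith [n0], by linarith [he 0]⟩
  · rw [fT, fU, dTU, show e 0 - (e 0 + e 1 + e 2 + e 3) = -(e 1 + e 2 + e 3) from by abel, norm_neg]
    exact ⟨by linarith [n123], by linarith [hu123]⟩
  · rw [dist_self', sub_self, norm_zero]
    exact ⟨by linarith, le_rfl⟩
  · rw [fT, fL, dTL, show e 0 - (e 0 + e 1) = -(e 1) from by abel, norm_neg]
    exact ⟨by linarith [n1], by linarith [he 1]⟩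
  · rw [fT, fR, dTR, show e 0 - (e 0 + e 2) = -(e 2) from by abel, norm_neg]
    exact ⟨by linarith [n2], by linarith [he 2]⟩
  · rw [fT, fB, dTB, show e 0 - (e 0 + e 1 + e 2) = -(e 1 + e 2) from by abel, norm_neg]
    exact ⟨by linarith [n12], by linarith [hu12]⟩
  · rw [fL, fA, dist_symm vL vA, dAL, show e 0 + e 1 - ((0:X)) = e 0 + e 1 from by abel]
    exact ⟨by linarith [n01], by linarith [hu01]⟩
  · rw [fL, fU, dLU, show e 0 + e 1 - (e 0 + e 1 + e 2 + e 3) = -(e 2 + e 3) from by abel, norm_neg]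
    exact ⟨by linarith [n23], by linarith [hu23]⟩
  · rw [fL, fT, dist_symm vL vT, dTL, show e 0 + e 1 - (e 0) = e 1 from by abel]
    exact ⟨by linarith [n1], by linarith [he 1]⟩
  · rw [dist_self', sub_self, norm_zero]
    exact ⟨by linarith, le_rfl⟩
  · rw [fL, fR, dLR, show e 0 + e 1 - (e 0 + e 2) = e 1 - e 2 from by abel]
    exact ⟨by linarith [nLR], by linarith [huLR]⟩
  · rw [fL, fB, dLB, show e 0 + e 1 - (e 0 + e 1 + e 2) = -(e 2) from by abel, norm_neg]
    exact ⟨by linarith [n2], by linarith [he 2]⟩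
  · rw [fR, fA, dist_symm vR vA, dAR, show e 0 + e 2 - ((0:X)) = e 0 + e 2 from by abel]
    exact ⟨by linarith [n02], by linarith [hu02]⟩
  · rw [fR, fU, dRU, show e 0 + e 2 - (e 0 + e 1 + e 2 + e 3) = -(e 1 + e 3) from by abel, norm_neg]
    exact ⟨by linarith [n13], by linarith [hu13]⟩
  · rw [fR, fT, dist_symm vR vT, dTR, show e 0 + e 2 - (e 0) = e 2 from by abel]
    exact ⟨by linarith [n2], by linarith [he 2]⟩
  · rw [fR, fL, dist_symm vR vL, dLR, show e 0 + e 2 - (e 0 + e 1) = -(e 1 - e 2) from by abel, norm_neg]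
    exact ⟨by linarith [nLR], by linarith [huLR]⟩
  · rw [dist_self', sub_self, norm_zero]
    exact ⟨by linarith, le_rfl⟩
  · rw [fR, fB, dRB, show e 0 + e 2 - (e 0 + e 1 + e 2) = -(e 1) from by abel, norm_neg]
    exact ⟨by linarith [n1], by linarith [he 1]⟩
  · rw [fB, fA, dist_symm vB vA, dAB, show e 0 + e 1 + e 2 - ((0:X)) = e 0 + e 1 + e 2 from by abel]
    exact ⟨by linarith [n012], by linarith [hu012]⟩
  · rw [fB, fU, dBU, show e 0 + e 1 + e 2 - (e 0 + e 1 + e 2 + e 3) = -(e 3) from by abel, norm_neg]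
    exact ⟨by linarith [n3], by linarith [he 3]⟩
  · rw [fB, fT, dist_symm vB vT, dTB, show e 0 + e 1 + e 2 - (e 0) = e 1 + e 2 from by abel]
    exact ⟨by linarith [n12], by linarith [hu12]⟩
  · rw [fB, fL, dist_symm vB vL, dLB, show e 0 + e 1 + e 2 - (e 0 + e 1) = e 2 from by abel]
    exact ⟨by linarith [n2], by linarith [he 2]⟩
  · rw [fB, fR, dist_symm vB vR, dRB, show e 0 + e 1 + e 2 - (e 0 + e 2) = e 1 from by abel]
    exact ⟨by linarith [n1], by linarith [he 1]⟩
  · rw [dist_self', sub_self, norm_zero]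
    exact ⟨by linarith, le_rfl⟩
end

section
/- Let X be a Banach space with the property that for every m ≥ 1 and every ε > 0 there exist vectors e_1, …, e_m in the closed unit ball of X such that ‖e_1 + ⋯ + e_j − e_{j+1} − ⋯ − e_m‖ ≥ m − ε for every 1 ≤ j ≤ m. Then for each n ≥ 1 and each ε > 0, the complete binary tree B_n of depth n embeds into X with distortion at most 1 + ε; that is, there exist a mapping f : B_n → X and constants 0 < α ≤ β with β/α ≤ 1 + ε such that α·d(a,b) ≤ ‖f(a) − f(b)‖ ≤ β·d(a,b) for all vertices a, b of B_n, where d is the shortest-path metric on B_n. -/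
open Finset


namespace TreeAux

/-- longest common prefix -/
def cpfx : List Bool → List Bool → List Bool
  | a :: as, b :: bs => if a = b then a :: cpfx as bs else []
  | _, _ => []

lemma cpfx_prefix_left : ∀ x y : List Bool, cpfx x y <+: x
  | [], _ => by simp [cpfx]
  | a :: as, [] => by simp [cpfx]
  | a :: as, b :: bs => by
    by_cases h : a = b
    · simp only [cpfx, if_pos h]; exact List.cons_prefix_cons.mpr ⟨rfl, cpfx_prefix_left as bs⟩
    · simp [cpfx, h]

lemma cpfx_prefix_right : ∀ x y : List Bool, cpfx x y <+: y
  | [], _ => by simp [cpfx]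
  | a :: as, [] => by simp [cpfx]
  | a :: as, b :: bs => by
    by_cases h : a = b
    · subst h; simp only [cpfx, if_pos rfl]; exact List.cons_prefix_cons.mpr ⟨rfl, cpfx_prefix_right as bs⟩
    · simp [cpfx, h]

lemma prefix_cpfx : ∀ x y p : List Bool, p <+: x → p <+: y → p <+: cpfx x y
  | _, _, [] , _, _ => by simp
  | [], _, p :: ps, h, _ => by simp at h
  | _ :: _, [], _ :: _, _, h => by simp at h
  | a :: as, b :: bs, c :: cs, h1, h2 => by
    rw [List.cons_prefix_cons] at h1 h2
    obtain ⟨rfl, h1⟩ := h1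
    obtain ⟨rfl, h2⟩ := h2
    simpa [cpfx, List.cons_prefix_cons] using prefix_cpfx as bs cs h1 h2

/-- longest common suffix -/
def lcs (u v : List Bool) : List Bool := (cpfx u.reverse v.reverse).reverse

lemma lcs_suffix_left (u v : List Bool) : lcs u v <:+ u := by
  rw [← List.reverse_prefix]; simpa [lcs] using cpfx_prefix_left u.reverse v.reverse

lemma lcs_suffix_right (u v : List Bool) : lcs u v <:+ v := by
  rw [← List.reverse_prefix]; simpa [lcs] using cpfx_prefix_right u.reverse v.reverse

lemma suffix_lcs {u v t : List Bool} (h1 : t <:+ u) (h2 : t <:+ v) : t <:+ lcs u v := by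
  rw [← List.reverse_prefix] at h1 h2 ⊢
  simpa [lcs] using prefix_cpfx u.reverse v.reverse t.reverse h1 h2

lemma lcs_self (u : List Bool) : lcs u u = u :=
  (lcs_suffix_left u u).eq_of_length (le_antisymm ((lcs_suffix_left u u).length_le)
    ((suffix_lcs (List.suffix_refl u) (List.suffix_refl u)).length_le))

/-- chain of suffixes -/
lemma suffix_of_suffix_length_le {a t u : List Bool} (h1 : t <:+ a) (h2 : u <:+ a)
    (h : t.length ≤ u.length) : t <:+ u := by
  rw [← List.reverse_prefix] at h1 h2 ⊢
  exact List.prefix_of_prefix_length_le h1 h2 (by simpa using h)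

lemma eq_of_suffix_of_length_eq {a t u : List Bool} (h1 : t <:+ a) (h2 : u <:+ a)
    (h : t.length = u.length) : t = u :=
  (suffix_of_suffix_length_le h1 h2 h.le).eq_of_length h

lemma exists_cons_suffix {t w : List Bool} (h : t <:+ w) (hl : t.length < w.length) :
    ∃ x, (x :: t) <:+ w := by
  obtain ⟨p, rfl⟩ := h
  rcases List.eq_nil_or_concat p with rfl | ⟨q, x, rfl⟩
  · simp at hl
  · exact ⟨x, q, by simp⟩

/-- tree distance between strings -/
def D (u v : List Bool) : ℕ :=
  (u.length - (lcs u v).length) + (v.length - (lcs u v).length)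

lemma D_self (u : List Bool) : D u u = 0 := by simp [D, lcs_self]

lemma D_cons (x : Bool) (u b : List Bool) :
    D (x :: u) b ≤ D u b + 1 ∧ D u b ≤ D (x :: u) b + 1 := by
  set t := lcs (x :: u) b with ht
  set s := lcs u b with hs
  have hsu : s <:+ u := lcs_suffix_left u b
  have hsb : s <:+ b := lcs_suffix_right u b
  have htxu : t <:+ x :: u := lcs_suffix_left _ b
  have htb : t <:+ b := lcs_suffix_right _ b
  have hst : s <:+ t := suffix_lcs (hsu.trans (List.suffix_cons x u)) hsb
  have hsu' := hsu.length_le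
  have hsb' := hsb.length_le
  have htb' := htb.length_le
  rcases List.suffix_cons_iff.mp htxu with h | h
  · -- t = x :: u
    have hub : u <:+ b := ((List.suffix_cons x u).trans (h ▸ htb))
    have hus : u <:+ s := suffix_lcs (List.suffix_refl u) hub
    have h1 : s.length = u.length := le_antisymm hsu' hus.length_le
    have h2 : t.length = u.length + 1 := by rw [h]; simp
    simp only [D, ← hs, ← ht, h1, h2, List.length_cons]
    omega
  · -- t <:+ u
    have hts : t <:+ s := suffix_lcs h htb
    have h1 : s.length = t.length := le_antisymm hst.length_le hts.length_le
    simp only [D, ← hs, ← ht, h1, List.length_cons]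
    omega

lemma D_eq_zero {u v : List Bool} (h : D u v = 0) : u = v := by
  have h1 := (lcs_suffix_left u v).length_le
  have h2 := (lcs_suffix_right u v).length_le
  have e1 : (lcs u v).length = u.length := by simp [D] at h; omega
  have e2 : (lcs u v).length = v.length := by simp [D] at h; omega
  calc u = lcs u v := ((lcs_suffix_left u v).eq_of_length e1).symm
    _ = v := (lcs_suffix_right u v).eq_of_length e2

end TreeAux

namespace TreeAux2
open TreeAux

/-- in-order index of a vertex of the binary tree of depth `n` -/
def iot (n : ℕ) : List Bool → ℕ
  | [] => 2 ^ n - 1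
  | x :: u => if x then iot n u + 2 ^ (n - u.length - 1) else iot n u - 2 ^ (n - u.length - 1)

lemma iot_bounds (n : ℕ) : ∀ u : List Bool, u.length ≤ n →
    2 ^ (n - u.length) - 1 ≤ iot n u ∧ iot n u ≤ 2 ^ (n + 1) - 2 ^ (n - u.length) - 1
  | [] => fun _ => by
    have h : 2 ^ (n + 1) = 2 * 2 ^ n := by ring
    have h1 : 1 ≤ 2 ^ n := Nat.one_le_two_pow
    simp only [iot, List.length_nil, Nat.sub_zero]
    omega
  | x :: u => fun hl => by
    have hu : u.length ≤ n := by simp at hl; omega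
    have hlt : u.length < n := by simpa using hl
    obtain ⟨ih1, ih2⟩ := iot_bounds n u hu
    have hp : 2 ^ (n - u.length) = 2 * 2 ^ (n - u.length - 1) := by
      rw [← pow_succ']; congr 1; omega
    have h1 : 1 ≤ 2 ^ (n - u.length - 1) := Nat.one_le_two_pow
    have hk : n - (x :: u).length = n - u.length - 1 := by simp only [List.length_cons]; omega
    cases x <;> simp only [iot, if_true, if_false, Bool.false_eq_true, hk] <;> omega

lemma iot_lt (n : ℕ) (u : List Bool) (hu : u.length ≤ n) : iot n u < 2 ^ (n + 1) - 1 := by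
  obtain ⟨-, h⟩ := iot_bounds n u hu
  have h1 : 1 ≤ 2 ^ (n - u.length) := Nat.one_le_two_pow
  have h2 : 1 ≤ 2 ^ (n + 1) := Nat.one_le_two_pow
  omega

lemma iot_false_suffix (n : ℕ) : ∀ w : List Bool, w.length ≤ n → ∀ s : List Bool,
    (false :: s) <:+ w → iot n w + 2 ^ (n - w.length) ≤ iot n s
  | [], h, s, hs => by simp at hs
  | x :: w', h, s, hs => by
    have hw' : w'.length ≤ n := by simp at h; omega
    have hk : n - (x :: w').length = n - w'.length - 1 := by simp only [List.length_cons]; omega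
    rcases List.suffix_cons_iff.mp hs with heq | hsuf
    · obtain ⟨hx, hw⟩ := List.cons_eq_cons.mp heq
      subst hx
      rw [← hw] at hw' h ⊢
      obtain ⟨hb1, -⟩ := iot_bounds n s hw'
      have hlt : s.length < n := by simpa using h
      have hp : 2 ^ (n - s.length) = 2 * 2 ^ (n - s.length - 1) := by
        rw [← pow_succ']; congr 1; omega
      have h1 : 1 ≤ 2 ^ (n - s.length - 1) := Nat.one_le_two_pow
      have hk2 : n - (false :: s).length = n - s.length - 1 := by
        simp only [List.length_cons]; omega
      simp only [iot, if_false, Bool.false_eq_true, hk2]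
      omega
    · have ih := iot_false_suffix n w' hw' s hsuf
      have hlen : w'.length < n := by simpa using h
      have hp : 2 ^ (n - w'.length) = 2 * 2 ^ (n - w'.length - 1) := by
        rw [← pow_succ']; congr 1; omega
      have h1 : 1 ≤ 2 ^ (n - w'.length - 1) := Nat.one_le_two_pow
      cases x <;> simp only [iot, if_true, if_false, Bool.false_eq_true, hk] <;> omega

lemma iot_true_suffix (n : ℕ) : ∀ w : List Bool, w.length ≤ n → ∀ s : List Bool,
    (true :: s) <:+ w → iot n s + 2 ^ (n - w.length) ≤ iot n w
  | [], h, s, hs => by simp at hs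
  | x :: w', h, s, hs => by
    have hw' : w'.length ≤ n := by simp at h; omega
    have hk : n - (x :: w').length = n - w'.length - 1 := by simp only [List.length_cons]; omega
    rcases List.suffix_cons_iff.mp hs with heq | hsuf
    · obtain ⟨hx, hw⟩ := List.cons_eq_cons.mp heq
      subst hx
      rw [← hw] at hw' h ⊢
      have hk2 : n - (true :: s).length = n - s.length - 1 := by
        simp only [List.length_cons]; omega
      simp only [iot, if_true, hk2]
      omega
    · have ih := iot_true_suffix n w' hw' s hsuf
      have hlen : w'.length < n := by simpa using h
      have hp : 2 ^ (n - w'.length) = 2 * 2 ^ (n - w'.length - 1) := by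
        rw [← pow_succ']; congr 1; omega
      have h1 : 1 ≤ 2 ^ (n - w'.length - 1) := Nat.one_le_two_pow
      cases x <;> simp only [iot, if_true, if_false, Bool.false_eq_true, hk] <;> omega

lemma iot_lt_of_false {n : ℕ} {w s : List Bool} (hw : w.length ≤ n)
    (h : (false :: s) <:+ w) : iot n w < iot n s := by
  have := iot_false_suffix n w hw s h
  have h1 : 1 ≤ 2 ^ (n - w.length) := Nat.one_le_two_pow
  omega

lemma iot_lt_of_true {n : ℕ} {w s : List Bool} (hw : w.length ≤ n)
    (h : (true :: s) <:+ w) : iot n s < iot n w := by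
  have := iot_true_suffix n w hw s h
  have h1 : 1 ≤ 2 ^ (n - w.length) := Nat.one_le_two_pow
  omega

lemma iot_ne_of_proper_suffix {n : ℕ} {t w : List Bool} (h : t <:+ w) (hne : t ≠ w)
    (hw : w.length ≤ n) : iot n w ≠ iot n t := by
  have hlt : t.length < w.length := by
    rcases lt_or_eq_of_le h.length_le with h' | h'
    · exact h'
    · exact absurd (h.eq_of_length h') hne
  obtain ⟨x, hx⟩ := exists_cons_suffix h hlt
  cases x
  · exact ne_of_lt (iot_lt_of_false hw hx)
  · exact ne_of_gt (iot_lt_of_true hw hx)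

end TreeAux2

/-- The vertex set of the complete binary tree `Bₙ` of depth `n`:
binary strings of length at most `n`. -/
def treeV (n : ℕ) : Type := { l : List Bool // l.length ≤ n }

/-- The complete binary tree `Bₙ` of depth `n`: the root is the empty string and each
string of length `k < n` is joined to its two one-letter extensions. -/
def treeGraph (n : ℕ) : SimpleGraph (treeV n) :=
  SimpleGraph.fromRel (fun u v => ∃ b : Bool, v.val = b :: u.val)

/-- The shortest-path metric on `Bₙ`, as a real number. -/
noncomputable def treeDist (n : ℕ) (a b : treeV n) : ℝ := ((treeGraph n).dist a b : ℝ)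

namespace TreeAux3
open TreeAux TreeAux2

lemma adj_cons {n : ℕ} (x : Bool) (u : List Bool) (h1 : (x :: u).length ≤ n)
    (h2 : u.length ≤ n) : (treeGraph n).Adj ⟨x :: u, h1⟩ ⟨u, h2⟩ := by
  refine (SimpleGraph.fromRel_adj ..).mpr ?_
  refine ⟨fun hc => ?_, Or.inr ⟨x, rfl⟩⟩
  have := congrArg (fun v : treeV n => v.val.length) hc
  simp at this

lemma exists_walk_to_suffix {n : ℕ} (s : treeV n) : ∀ (u : List Bool) (hu : u.length ≤ n),
    s.val <:+ u → ∃ w : (treeGraph n).Walk ⟨u, hu⟩ s, w.length = u.length - s.val.length := by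
  intro u
  induction u with
  | nil =>
    intro hu hs
    have h0 : s = ⟨[], hu⟩ := Subtype.ext (List.suffix_nil.mp hs)
    subst h0
    exact ⟨SimpleGraph.Walk.nil, by simp; rfl⟩
  | cons x u' ih =>
    intro hu hs
    by_cases h : s.val = x :: u'
    · have h0 : s = ⟨x :: u', hu⟩ := Subtype.ext h
      subst h0
      exact ⟨SimpleGraph.Walk.nil, by simp; rfl⟩
    · have hu' : u'.length ≤ n := by simp at hu; omega
      have hs' : s.val <:+ u' := by
        rcases List.suffix_cons_iff.mp hs with h' | h'
        · exact absurd h' h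
        · exact h'
      obtain ⟨w, hw⟩ := ih hu' hs'
      refine ⟨SimpleGraph.Walk.cons (adj_cons x u' hu hu') w, ?_⟩
      have := hs'.length_le
      simp only [SimpleGraph.Walk.length_cons, hw, List.length_cons]
      have hc : (SimpleGraph.Walk.cons (adj_cons x u' hu hu') w).length = w.length + 1 := rfl
      omega

lemma D_le_walk {n : ℕ} {a b : treeV n} (w : (treeGraph n).Walk a b) :
    D a.val b.val ≤ w.length := by
  induction w with
  | nil => simp [D_self]
  | @cons u v c hadj p ih =>
    have hle : D u.val c.val ≤ D v.val c.val + 1 := by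
      rw [treeGraph, SimpleGraph.fromRel_adj] at hadj
      rcases hadj.2 with ⟨x, hx⟩ | ⟨x, hx⟩
      · rw [hx]; exact (D_cons x u.val c.val).2
      · rw [hx]; exact (D_cons x v.val c.val).1
    simp only [SimpleGraph.Walk.length_cons]
    omega

lemma dist_eq_D {n : ℕ} (a b : treeV n) :
    (treeGraph n).dist a b = D a.val b.val := by
  have hsa := lcs_suffix_left a.val b.val
  have hsb := lcs_suffix_right a.val b.val
  obtain ⟨wa, hwa⟩ :=
    exists_walk_to_suffix (⟨lcs a.val b.val, hsa.length_le.trans a.prop⟩ : treeV n) a.val a.prop hsa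
  obtain ⟨wb, hwb⟩ :=
    exists_walk_to_suffix (⟨lcs a.val b.val, hsa.length_le.trans a.prop⟩ : treeV n) b.val b.prop hsb
  have w : (treeGraph n).Walk a b := wa.append wb.reverse
  apply le_antisymm
  · have h1 : (treeGraph n).dist a b ≤ (wa.append wb.reverse).length :=
      SimpleGraph.dist_le (wa.append wb.reverse)
    have h2 : (wa.append wb.reverse).length = D a.val b.val := by
      simp only [SimpleGraph.Walk.length_append, SimpleGraph.Walk.length_reverse, hwa, hwb, D]
      have l1 := SimpleGraph.Walk.length_append wa wb.reverse
      have l2 := SimpleGraph.Walk.length_reverse wb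
      have l3 : (lcs a.val b.val).length = ((⟨lcs a.val b.val, hsa.length_le.trans a.prop⟩ : treeV n).val).length := rfl
      omega
    omega
  · obtain ⟨p, hp⟩ := (SimpleGraph.Walk.reachable w).exists_walk_length_eq_dist
    rw [← hp]
    exact D_le_walk p

end TreeAux3

namespace TreeAux4
open Finset TreeAux TreeAux2

variable {X : Type*} [NormedAddCommGroup X]

lemma norm_sum_le_card {m : ℕ} (e : Fin m → X) (he : ∀ i, ‖e i‖ ≤ 1) (S : Finset (Fin m)) :
    ‖∑ i ∈ S, e i‖ ≤ (S.card : ℝ) := by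
  calc ‖∑ i ∈ S, e i‖ ≤ ∑ i ∈ S, ‖e i‖ := norm_sum_le _ _
    _ ≤ ∑ _i ∈ S, (1 : ℝ) := Finset.sum_le_sum fun i _ => he i
    _ = S.card := by simp

lemma key_j {m : ℕ} {ε' : ℝ} (e : Fin m → X) (he1 : ∀ i, ‖e i‖ ≤ 1)
    (he2 : ∀ j : Fin m, ‖(∑ i ∈ Finset.univ.filter (fun i => i ≤ j), e i)
          - ∑ i ∈ Finset.univ.filter (fun i => j < i), e i‖ ≥ (m : ℝ) - ε')
    (A B : Finset (Fin m)) (j : Fin m) (hA : ∀ a ∈ A, a ≤ j) (hB : ∀ b ∈ B, j < b) :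
    (A.card : ℝ) + (B.card : ℝ) - ε' ≤ ‖(∑ i ∈ A, e i) - ∑ i ∈ B, e i‖ := by
  classical
  set P := Finset.univ.filter (fun i : Fin m => i ≤ j) with hP
  set Q := Finset.univ.filter (fun i : Fin m => j < i) with hQ
  have hAP : A ⊆ P := fun a ha => by simp [hP, hA a ha]
  have hBQ : B ⊆ Q := fun b hb => by simp [hQ, hB b hb]
  have hsplit : (∑ i ∈ P, e i) - ∑ i ∈ Q, e i
      = ((∑ i ∈ A, e i) - ∑ i ∈ B, e i) + ((∑ i ∈ P \ A, e i) - ∑ i ∈ Q \ B, e i) := by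
    rw [← Finset.sum_sdiff hAP, ← Finset.sum_sdiff hBQ]; abel
  have h1 : (m : ℝ) - ε' ≤ ‖(∑ i ∈ P, e i) - ∑ i ∈ Q, e i‖ := he2 j
  have hPQ : P.card + Q.card = m := by
    have h := Finset.card_filter_add_card_filter_not
      (s := (univ : Finset (Fin m))) (p := fun i : Fin m => i ≤ j)
    have hq : Finset.univ.filter (fun i : Fin m => ¬ i ≤ j) = Q := by
      ext i; simp [hQ, not_le]
    rw [hq] at h
    simpa using h
  have h3 : ‖(∑ i ∈ P, e i) - ∑ i ∈ Q, e i‖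
      ≤ ‖(∑ i ∈ A, e i) - ∑ i ∈ B, e i‖ + (‖∑ i ∈ P \ A, e i‖ + ‖∑ i ∈ Q \ B, e i‖) := by
    rw [hsplit]
    refine (norm_add_le _ _).trans ?_
    have := norm_sub_le (∑ i ∈ P \ A, e i) (∑ i ∈ Q \ B, e i)
    linarith
  have h4 : ‖∑ i ∈ P \ A, e i‖ ≤ (P.card : ℝ) - A.card := by
    have := norm_sum_le_card e he1 (P \ A)
    rwa [Finset.card_sdiff_of_subset hAP, Nat.cast_sub (Finset.card_le_card hAP)] at this
  have h5 : ‖∑ i ∈ Q \ B, e i‖ ≤ (Q.card : ℝ) - B.card := by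
    have := norm_sum_le_card e he1 (Q \ B)
    rwa [Finset.card_sdiff_of_subset hBQ, Nat.cast_sub (Finset.card_le_card hBQ)] at this
  have h6 : (P.card : ℝ) + Q.card = m := by exact_mod_cast congrArg (Nat.cast : ℕ → ℝ) hPQ
  linarith

lemma key {m : ℕ} (hm : 1 ≤ m) {ε' : ℝ} (hε' : 0 ≤ ε') (e : Fin m → X)
    (he1 : ∀ i, ‖e i‖ ≤ 1)
    (he2 : ∀ j : Fin m, ‖(∑ i ∈ Finset.univ.filter (fun i => i ≤ j), e i)
          - ∑ i ∈ Finset.univ.filter (fun i => j < i), e i‖ ≥ (m : ℝ) - ε')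
    (A B : Finset (Fin m)) (hord : ∀ p ∈ A, ∀ q ∈ B, p < q) :
    (A.card : ℝ) + (B.card : ℝ) - ε' ≤ ‖(∑ i ∈ A, e i) - ∑ i ∈ B, e i‖ := by
  rcases A.eq_empty_or_nonempty with rfl | hA
  · rcases B.eq_empty_or_nonempty with rfl | hB
    · simpa using hε'
    · have h := key_j e he1 he2 B ∅ (B.max' hB) (fun b hb => Finset.le_max' B b hb)
        (by simp)
      simp only [Finset.sum_empty, Finset.card_empty, Nat.cast_zero, add_zero, sub_zero,
        zero_add, zero_sub, norm_neg] at h ⊢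
      exact h
  · exact key_j e he1 he2 A B (A.max' hA) (fun a ha => Finset.le_max' A a ha)
      (fun b hb => hord _ (A.max'_mem hA) b hb)

end TreeAux4

namespace TreeAux5
open Finset TreeAux TreeAux2 TreeAux3 TreeAux4

/-- labeling of vertices by `Fin m` via the in-order index. -/
def lab (n m : ℕ) (hm : 1 ≤ m) (t : List Bool) : Fin m :=
  if h : iot n t < m then ⟨iot n t, h⟩ else ⟨0, hm⟩

lemma lab_val {n m : ℕ} (hm : 1 ≤ m) {t : List Bool} (h : iot n t < m) :
    ((lab n m hm t : Fin m) : ℕ) = iot n t := by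
  simp [lab, dif_pos h]

end TreeAux5

open Finset TreeAux TreeAux2 TreeAux3 TreeAux4 TreeAux5

/-- **Remark after Theorem A.** If `X` is not super-reflexive (expressed via the
J-convexity-failure condition of James and Schaffer–Sullivan), then for each `n ≥ 1` and
`ε > 0` the complete binary tree `Bₙ` of depth `n` embeds into `X` with distortion at
most `1 + ε`. -/
theorem tree_stmt11 {X : Type*} [NormedAddCommGroup X] [NormedSpace ℝ X] [CompleteSpace X]
    (hX : ∀ m : ℕ, 1 ≤ m → ∀ ε : ℝ, 0 < ε → ∃ e : Fin m → X,
      (∀ i, ‖e i‖ ≤ 1) ∧ ∀ j : Fin m,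
        ‖(∑ i ∈ Finset.univ.filter (fun i => i ≤ j), e i)
          - ∑ i ∈ Finset.univ.filter (fun i => j < i), e i‖ ≥ (m : ℝ) - ε)
    (n : ℕ) (hn : 1 ≤ n) (ε : ℝ) (hε : 0 < ε) :
    ∃ (f : treeV n → X) (α β : ℝ), 0 < α ∧ α ≤ β ∧ β / α ≤ 1 + ε ∧
      ∀ a b : treeV n, α * treeDist n a b ≤ ‖f a - f b‖ ∧ ‖f a - f b‖ ≤ β * treeDist n a b := by
  classical
  have hε1 : (0:ℝ) < 1 + ε := by linarith
  set m : ℕ := 2 ^ (n + 1) - 1 with hmdef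
  have hm1 : 1 ≤ m := by
    have h2 : 2 ≤ 2 ^ (n + 1) := by
      calc 2 = 2 ^ 1 := by norm_num
        _ ≤ 2 ^ (n + 1) := Nat.pow_le_pow_right (by norm_num) (by omega)
    omega
  obtain ⟨e, he1, he2⟩ := hX m hm1 (ε / (1 + ε)) (div_pos hε hε1)
  set ε' : ℝ := ε / (1 + ε) with hε'def
  have hε'pos : 0 < ε' := div_pos hε hε1
  have hiotlt : ∀ t : List Bool, t.length ≤ n → iot n t < m := fun t ht => iot_lt n t ht
  set f : treeV n → X :=
    fun v => ∑ i ∈ Finset.range v.val.length, e (lab n m hm1 (v.val.drop i)) with hfdef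
  refine ⟨f, 1 / (1 + ε), 1, by positivity, ?_, ?_, ?_⟩
  · rw [div_le_one hε1]; linarith
  · have : (1:ℝ) / (1 / (1 + ε)) = 1 + ε := by field_simp
    exact le_of_eq this
  intro a b
  have hdist : treeDist n a b = ((D a.val b.val : ℕ) : ℝ) := by
    rw [treeDist, dist_eq_D]
  by_cases hab : a = b
  · subst hab
    simp [hdist, D_self, sub_self]
  -- notation
  have hsa : lcs a.val b.val <:+ a.val := lcs_suffix_left _ _
  have hsb : lcs a.val b.val <:+ b.val := lcs_suffix_right _ _
  set s : List Bool := lcs a.val b.val with hsdef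
  set la : ℕ := a.val.length with hladef
  set lb : ℕ := b.val.length with hlbdef
  set ls : ℕ := s.length with hlsdef
  have hlsa : ls ≤ la := hsa.length_le
  have hlsb : ls ≤ lb := hsb.length_le
  have hDval : D a.val b.val = (la - ls) + (lb - ls) := rfl
  have hD1 : 1 ≤ D a.val b.val := by
    rcases Nat.eq_zero_or_pos (D a.val b.val) with h0 | h0
    · exact absurd (Subtype.ext (D_eq_zero h0)) hab
    · omega
  -- splitting the sums
  have hsplit : ∀ (u : List Bool), u.length ≤ n → s <:+ u →
      ∑ i ∈ Finset.range u.length, e (lab n m hm1 (u.drop i))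
        = (∑ i ∈ Finset.range (u.length - ls), e (lab n m hm1 (u.drop i)))
          + ∑ i ∈ Finset.range ls, e (lab n m hm1 (s.drop i)) := by
    intro u hu hsu
    obtain ⟨p, hp⟩ := hsu
    have hpl : p.length + ls = u.length := by
      rw [← hp]; simp [hlsdef]
    have hdrop : ∀ i : ℕ, u.drop ((u.length - ls) + i) = s.drop i := by
      intro i
      have hidx : u.length - ls + i = p.length + i := by omega
      rw [hidx, ← hp, List.drop_append]; simp
    have hlen : u.length = (u.length - ls) + ls := by omega
    calc ∑ i ∈ Finset.range u.length, e (lab n m hm1 (u.drop i))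
        = ∑ i ∈ Finset.range ((u.length - ls) + ls), e (lab n m hm1 (u.drop i)) := by
          rw [← hlen]
      _ = (∑ i ∈ Finset.range (u.length - ls), e (lab n m hm1 (u.drop i)))
          + ∑ i ∈ Finset.range ls, e (lab n m hm1 (u.drop ((u.length - ls) + i))) :=
          Finset.sum_range_add _ _ _
      _ = _ := by
          congr 1
          exact Finset.sum_congr rfl fun i _ => by rw [hdrop i]
  have hfa : f a - f b
      = (∑ i ∈ Finset.range (la - ls), e (lab n m hm1 (a.val.drop i)))
        - ∑ i ∈ Finset.range (lb - ls), e (lab n m hm1 (b.val.drop i)) := by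
    rw [hfdef]
    simp only []
    rw [hsplit a.val a.prop hsa, hsplit b.val b.prop hsb]
    abel
  -- upper bound
  have hsumnorm : ∀ (k : ℕ) (g : ℕ → Fin m), ‖∑ i ∈ Finset.range k, e (g i)‖ ≤ (k : ℝ) := by
    intro k g
    calc ‖∑ i ∈ Finset.range k, e (g i)‖ ≤ ∑ i ∈ Finset.range k, ‖e (g i)‖ := norm_sum_le _ _
      _ ≤ ∑ _i ∈ Finset.range k, (1:ℝ) := Finset.sum_le_sum fun i _ => he1 _
      _ = k := by simp
  have hub : ‖f a - f b‖ ≤ ((la - ls : ℕ) : ℝ) + ((lb - ls : ℕ) : ℝ) := by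
    rw [hfa]
    refine (norm_sub_le _ _).trans ?_
    exact add_le_add (hsumnorm _ _) (hsumnorm _ _)
  -- injectivity of labels along a branch
  have hdropinj : ∀ (u : List Bool), u.length ≤ n → ∀ i ∈ Finset.range (u.length - ls),
      ∀ i' ∈ Finset.range (u.length - ls),
      lab n m hm1 (u.drop i) = lab n m hm1 (u.drop i') → i = i' := by
    intro u hu i hi i' hi' heq
    simp only [Finset.mem_range] at hi hi'
    by_contra hne
    have hcore : ∀ k k' : ℕ, k < k' → k' < u.length →
        lab n m hm1 (u.drop k) ≠ lab n m hm1 (u.drop k') := by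
      intro k k' hkk' hk' hlabeq
      have hsuf : u.drop k' <:+ u.drop k := by
        have h := List.drop_suffix (k' - k) (u.drop k)
        rwa [List.drop_drop, show k + (k' - k) = k' from by omega] at h
      have hlen1 : (u.drop k).length ≤ n := by simp; omega
      have hne2 : u.drop k' ≠ u.drop k := by
        intro hE
        have := congrArg List.length hE
        simp at this
        omega
      have hioteq : iot n (u.drop k) = iot n (u.drop k') := by
        have h1 := lab_val (n := n) hm1 (hiotlt _ hlen1)
        have h2 := lab_val (n := n) hm1 (hiotlt _ (by simp; omega : (u.drop k').length ≤ n))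
        rw [← h1, ← h2, hlabeq]
      exact iot_ne_of_proper_suffix hsuf hne2 hlen1 hioteq
    rcases lt_or_gt_of_ne hne with h | h
    · exact hcore i i' h (by omega) heq
    · exact hcore i' i h (by omega) heq.symm
  set A : Finset (Fin m) := (Finset.range (la - ls)).image (fun i => lab n m hm1 (a.val.drop i))
    with hAdef
  set B : Finset (Fin m) := (Finset.range (lb - ls)).image (fun i => lab n m hm1 (b.val.drop i))
    with hBdef
  have hcardA : A.card = la - ls := by
    rw [hAdef, Finset.card_image_of_injOn fun x hx y hy => hdropinj a.val a.prop x hx y hy]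
    simp [hladef]
  have hcardB : B.card = lb - ls := by
    rw [hBdef, Finset.card_image_of_injOn fun x hx y hy => hdropinj b.val b.prop x hx y hy]
    simp [hlbdef]
  have hsumA : ∑ p ∈ A, e p = ∑ i ∈ Finset.range (la - ls), e (lab n m hm1 (a.val.drop i)) :=
    Finset.sum_image (hdropinj a.val a.prop)
  have hsumB : ∑ p ∈ B, e p = ∑ i ∈ Finset.range (lb - ls), e (lab n m hm1 (b.val.drop i)) :=
    Finset.sum_image (hdropinj b.val b.prop)
  -- ordering
  have hord2 : (∀ p ∈ A, ∀ q ∈ B, p < q) ∨ (∀ q ∈ B, ∀ p ∈ A, q < p) := by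
    rcases Nat.eq_or_lt_of_le hlsa with hea | hlta
    · left
      intro p hp
      rw [hAdef] at hp
      simp [← hea] at hp
    · rcases Nat.eq_or_lt_of_le hlsb with heb | hltb
      · left
        intro p hp q hq
        rw [hBdef] at hq
        simp [← heb] at hq
      · obtain ⟨x, hx⟩ := exists_cons_suffix hsa hlta
        obtain ⟨y, hy⟩ := exists_cons_suffix hsb hltb
        have hxy : x ≠ y := by
          intro hE
          subst hE
          have : (x :: s) <:+ s := suffix_lcs hx hy
          have := this.length_le
          simp [hlsdef] at this
        have hmem : ∀ (u : List Bool) (hu : u.length ≤ n) (z : Bool), (z :: s) <:+ u →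
            ∀ i ∈ Finset.range (u.length - ls), (z :: s) <:+ u.drop i := by
          intro u hu z hz i hi
          simp only [Finset.mem_range] at hi
          refine suffix_of_suffix_length_le hz (List.drop_suffix i u) ?_
          have : ls = s.length := hlsdef
          simp only [List.length_cons, List.length_drop]
          omega
        have hiots : ∀ (u : List Bool) (hu : u.length ≤ n) (z : Bool) (hz : (z :: s) <:+ u),
            ∀ i ∈ Finset.range (u.length - ls),
              (z = false → iot n (u.drop i) < iot n s) ∧
              (z = true → iot n s < iot n (u.drop i)) := by
          intro u hu z hz i hi
          have hsuf := hmem u hu z hz i hi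
          have hl : (u.drop i).length ≤ n := by simp; omega
          constructor
          · rintro rfl; exact iot_lt_of_false hl hsuf
          · rintro rfl; exact iot_lt_of_true hl hsuf
        have hltAB : ∀ i ∈ Finset.range (la - ls), ∀ i' ∈ Finset.range (lb - ls),
            (x = false → y = true →
              lab n m hm1 (a.val.drop i) < lab n m hm1 (b.val.drop i')) ∧
            (x = true → y = false →
              lab n m hm1 (b.val.drop i') < lab n m hm1 (a.val.drop i)) := by
          intro i hi i' hi'
          have hA1 := hiots a.val a.prop x hx i hi
          have hB1 := hiots b.val b.prop y hy i' hi'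
          have hla1 : (a.val.drop i).length ≤ n := by
            have h2 := a.2
            simp only [List.length_drop]
            omega
          have hlb1 : (b.val.drop i').length ≤ n := by
            have h2 := b.2
            simp only [List.length_drop]
            omega
          have hva := lab_val (n := n) hm1 (hiotlt _ hla1)
          have hvb := lab_val (n := n) hm1 (hiotlt _ hlb1)
          constructor
          · rintro rfl rfl
            rw [Fin.lt_def, hva, hvb]
            exact lt_trans (hA1.1 rfl) (hB1.2 rfl)
          · rintro rfl rfl
            rw [Fin.lt_def, hva, hvb]
            exact lt_trans (hB1.1 rfl) (hA1.2 rfl)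
        cases x
        · left
          intro p hp q hq
          rw [hAdef] at hp; rw [hBdef] at hq
          simp only [Finset.mem_image] at hp hq
          obtain ⟨i, hi, rfl⟩ := hp
          obtain ⟨i', hi', rfl⟩ := hq
          have hy' : y = true := by
            cases y
            · exact absurd rfl hxy
            · rfl
          subst hy'
          exact (hltAB i hi i' hi').1 rfl rfl
        · right
          intro q hq p hp
          rw [hAdef] at hp; rw [hBdef] at hq
          simp only [Finset.mem_image] at hp hq
          obtain ⟨i, hi, rfl⟩ := hp
          obtain ⟨i', hi', rfl⟩ := hq
          have hy' : y = false := by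
            cases y
            · rfl
            · exact absurd rfl hxy
          subst hy'
          exact (hltAB i hi i' hi').2 rfl rfl
  -- lower bound
  have hlow : ((la - ls : ℕ) : ℝ) + ((lb - ls : ℕ) : ℝ) - ε' ≤ ‖f a - f b‖ := by
    rw [hfa, ← hsumA, ← hsumB]
    rcases hord2 with h | h
    · have hk := key hm1 hε'pos.le e he1 he2 A B h
      rw [hcardA, hcardB] at hk
      exact hk
    · have hk := key hm1 hε'pos.le e he1 he2 B A h
      rw [hcardA, hcardB] at hk
      rw [norm_sub_rev]
      linarith
  -- final
  have hDr : ((D a.val b.val : ℕ) : ℝ) = ((la - ls : ℕ) : ℝ) + ((lb - ls : ℕ) : ℝ) := by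
    rw [hDval]; push_cast; ring
  have hD1r : (1 : ℝ) ≤ ((D a.val b.val : ℕ) : ℝ) := by exact_mod_cast hD1
  constructor
  · rw [hdist]
    have halg : ((D a.val b.val : ℕ) : ℝ) - ε' - 1 / (1 + ε) * ((D a.val b.val : ℕ) : ℝ)
        = (((D a.val b.val : ℕ) : ℝ) - 1) * (ε / (1 + ε)) := by
      rw [hε'def]; field_simp; ring
    have hge : (0:ℝ) ≤ (((D a.val b.val : ℕ) : ℝ) - 1) * (ε / (1 + ε)) := by
      apply mul_nonneg (by linarith) (le_of_lt (div_pos hε hε1))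
    rw [hDr] at halg hge ⊢
    linarith
  · rw [hdist, one_mul, hDr]
    exact hub
end

section
/- Let x_1, …, x_n be distinct elements of L^1([0,1]) and let k_1, …, k_n be integers with k_1 + ⋯ + k_n = 0. Then ∑_{1 ≤ i < j ≤ n} k_i k_j ‖x_i − x_j‖_1 ≤ 0. -/
open Finset MeasureTheory

/-- Lebesgue measure restricted to `[0,1]`; `Lp ℝ 1` of this measure is `L¹([0,1])`. -/
noncomputable def μ01 : Measure ℝ := volume.restrict (Set.Icc (0 : ℝ) 1)

lemma ind_prod (a b t : ℝ) :
    (Set.Iio a).indicator (fun _ => (1:ℝ)) t * (Set.Iio b).indicator (fun _ => (1:ℝ)) t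
      = (Set.Iio (min a b)).indicator (fun _ => (1:ℝ)) t := by
  by_cases h1 : t < a <;> by_cases h2 : t < b <;>
    simp [Set.indicator_apply, h1, h2, lt_min_iff, *]

lemma ind_integrable (a : ℝ) :
    Integrable ((Set.Iio a).indicator (fun _ => (1:ℝ))) (volume.restrict (Set.Ioi (0:ℝ))) := by
  rw [integrable_indicator_iff measurableSet_Iio]
  refine integrableOn_const (lt_top_iff_ne_top.1 ?_)
  rw [Measure.restrict_apply measurableSet_Iio, Set.Iio_inter_Ioi, Real.volume_Ioo]
  exact ENNReal.ofReal_lt_top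

lemma min_eq_integral {a b : ℝ} (ha : 0 ≤ a) (hb : 0 ≤ b) :
    min a b = ∫ t in Set.Ioi (0:ℝ),
      (Set.Iio a).indicator (fun _ => (1:ℝ)) t * (Set.Iio b).indicator (fun _ => (1:ℝ)) t := by
  simp_rw [ind_prod]
  rw [MeasureTheory.integral_indicator measurableSet_Iio]
  rw [Measure.restrict_restrict measurableSet_Iio, Set.Iio_inter_Ioi, setIntegral_const]
  rw [Real.volume_real_Ioo_of_le (le_min ha hb), smul_eq_mul, mul_one, sub_zero]

lemma min_sum_nonneg {n : ℕ} (k : Fin n → ℤ) (a : Fin n → ℝ) (ha : ∀ i, 0 ≤ a i) :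
    0 ≤ ∑ i, ∑ j, ((k i : ℝ) * (k j : ℝ)) * min (a i) (a j) := by
  set g : Fin n → ℝ → ℝ := fun i t => (k i : ℝ) * (Set.Iio (a i)).indicator (fun _ => (1:ℝ)) t
    with hg
  have hint : ∀ i j : Fin n, Integrable (fun t => g i t * g j t)
      (volume.restrict (Set.Ioi (0:ℝ))) := by
    intro i j
    have : (fun t => g i t * g j t) = fun t =>
        ((k i : ℝ) * (k j : ℝ)) * (Set.Iio (min (a i) (a j))).indicator (fun _ => (1:ℝ)) t := by
      funext t
      simp only [hg]
      rw [show (↑(k i) * (Set.Iio (a i)).indicator (fun _ => (1:ℝ)) t) *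
          (↑(k j) * (Set.Iio (a j)).indicator (fun _ => (1:ℝ)) t)
        = ((k i : ℝ) * (k j : ℝ)) * ((Set.Iio (a i)).indicator (fun _ => (1:ℝ)) t *
          (Set.Iio (a j)).indicator (fun _ => (1:ℝ)) t) by ring, ind_prod]
    rw [this]
    exact (ind_integrable _).const_mul _
  have key : ∑ i, ∑ j, ((k i : ℝ) * (k j : ℝ)) * min (a i) (a j)
      = ∫ t in Set.Ioi (0:ℝ), (∑ i, g i t)^2 := by
    have : ∀ t : ℝ, (∑ i, g i t)^2 = ∑ i, ∑ j, g i t * g j t := by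
      intro t; rw [sq, Finset.sum_mul_sum]
    simp_rw [this]
    rw [integral_finset_sum _ (fun i _ => integrable_finset_sum _ (fun j _ => hint i j))]
    refine Finset.sum_congr rfl fun i _ => ?_
    rw [integral_finset_sum _ (fun j _ => hint i j)]
    refine Finset.sum_congr rfl fun j _ => ?_
    rw [min_eq_integral (ha i) (ha j), ← integral_const_mul]
    refine integral_congr_ae (Filter.Eventually.of_forall fun t => ?_)
    simp only [hg]; ring
  rw [key]
  exact integral_nonneg fun t => sq_nonneg _

lemma real_negtype {n : ℕ} (k : Fin n → ℤ) (a : Fin n → ℝ) (hk : ∑ i, k i = 0) :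
    ∑ i, ∑ j, ((k i : ℝ) * (k j : ℝ)) * |a i - a j| ≤ 0 := by
  -- shift to nonneg
  set c : ℝ := ∑ j, |a j| with hc
  have hc0 : ∀ i, 0 ≤ a i + c := by
    intro i
    have h1 : |a i| ≤ c := Finset.single_le_sum (f := fun j => |a j|)
      (fun j _ => abs_nonneg _) (Finset.mem_univ i)
    have := neg_abs_le (a i)
    linarith
  have hmin := min_sum_nonneg k (fun i => a i + c) hc0
  have hK : (∑ i, (k i : ℝ)) = 0 := by
    rw [← Int.cast_sum, hk, Int.cast_zero]
  have habs : ∀ i j : Fin n, |a i - a j| = (a i + c) + (a j + c) - 2 * min (a i + c) (a j + c) := by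
    intro i j
    rcases le_total (a i) (a j) with h | h
    · rw [min_eq_left (by linarith), abs_of_nonpos (by linarith)]; ring
    · rw [min_eq_right (by linarith), abs_of_nonneg (by linarith)]; ring
  have h1 : ∑ i, ∑ j, ((k i:ℝ) * (k j:ℝ)) * ((a i + c) + (a j + c)) = 0 := by
    have e : ∀ i j : Fin n, ((k i:ℝ) * (k j:ℝ)) * ((a i + c) + (a j + c))
        = ((k i:ℝ)*(a i + c)) * (k j:ℝ) + (k i:ℝ) * ((k j:ℝ)*(a j + c)) := fun i j => by ring
    simp_rw [e, Finset.sum_add_distrib, ← Finset.mul_sum, ← Finset.sum_mul, hK]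
    ring
  have h2 : ∑ i, ∑ j, ((k i:ℝ)*(k j:ℝ)) * |a i - a j|
      = (∑ i, ∑ j, ((k i:ℝ)*(k j:ℝ))*((a i+c)+(a j+c)))
        - 2 * ∑ i, ∑ j, ((k i:ℝ)*(k j:ℝ)) * min (a i+c) (a j+c) := by
    simp_rw [habs, mul_sub, mul_left_comm _ (2:ℝ), Finset.sum_sub_distrib, ← Finset.mul_sum]
  rw [h2, h1]
  linarith

/-- **Negative type inequality for `L¹([0,1])`.** If `x₁, …, xₙ` are distinct elements of
`L¹([0,1])` and `k₁, …, kₙ` are integers with `k₁ + ⋯ + kₙ = 0`, then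
`∑_{i < j} kᵢ kⱼ ‖xᵢ − xⱼ‖₁ ≤ 0`. -/
theorem negtype_stmt12 (n : ℕ) (x : Fin n → Lp ℝ 1 μ01) (hx : Function.Injective x)
    (k : Fin n → ℤ) (hk : ∑ i, k i = 0) :
    ∑ i : Fin n, ∑ j ∈ Finset.univ.filter (fun j => i < j),
      ((k i : ℝ) * (k j : ℝ)) * ‖x i - x j‖ ≤ 0 := by
  set f : Fin n → Fin n → ℝ := fun i j => ((k i : ℝ) * (k j : ℝ)) * ‖x i - x j‖ with hf
  have hsymm : ∀ i j, f i j = f j i := fun i j => by simp only [hf, norm_sub_rev (x i)]; ring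
  have hnormint : ∀ i j : Fin n, ‖x i - x j‖ = ∫ t, |(x i) t - (x j) t| ∂μ01 := by
    intro i j
    rw [L1.norm_eq_integral_norm]
    refine integral_congr_ae ?_
    filter_upwards [Lp.coeFn_sub (x i) (x j)] with t ht
    rw [ht]; simp [Real.norm_eq_abs]
  have hint : ∀ i j : Fin n,
      Integrable (fun t => ((k i:ℝ)*(k j:ℝ)) * |(x i) t - (x j) t|) μ01 :=
    fun i j => (((L1.integrable_coeFn (x i)).sub (L1.integrable_coeFn (x j))).abs).const_mul _
  have hF : ∑ i, ∑ j, f i j ≤ 0 := by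
    calc ∑ i, ∑ j, f i j
        = ∫ t, ∑ i, ∑ j, ((k i:ℝ)*(k j:ℝ)) * |(x i) t - (x j) t| ∂μ01 := by
          rw [integral_finset_sum _ (fun i _ => integrable_finset_sum _ (fun j _ => hint i j))]
          refine Finset.sum_congr rfl fun i _ => ?_
          rw [integral_finset_sum _ (fun j _ => hint i j)]
          refine Finset.sum_congr rfl fun j _ => ?_
          simp only [hf]; rw [hnormint i j, ← integral_const_mul]
      _ ≤ 0 := integral_nonpos fun t => real_negtype k (fun i => (x i) t) hk
  have hsplit : ∀ i, ∑ j, f i j = (∑ j ∈ Finset.univ.filter (fun j => i < j), f i j)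
      + ∑ j ∈ Finset.univ.filter (fun j => j < i), f i j := by
    intro i
    rw [← Finset.sum_filter_add_sum_filter_not Finset.univ (fun j => i < j) (f i)]
    congr 1
    refine (Finset.sum_subset (fun j hj => ?_) (fun j hj hj' => ?_)).symm
    · simp only [Finset.mem_filter, Finset.mem_univ, true_and] at hj ⊢
      exact not_lt.2 hj.le
    · simp only [Finset.mem_filter, Finset.mem_univ, true_and] at hj hj'
      have : j = i := le_antisymm (not_lt.1 hj) (not_lt.1 hj')
      simp [hf, this]
  have hswap : (∑ i, ∑ j ∈ Finset.univ.filter (fun j => j < i), f i j)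
      = ∑ i, ∑ j ∈ Finset.univ.filter (fun j => i < j), f i j := by
    simp_rw [Finset.sum_filter]
    rw [Finset.sum_comm]
    refine Finset.sum_congr rfl fun i _ => Finset.sum_congr rfl fun j _ => ?_
    rw [hsymm]
  have : ∑ i, ∑ j, f i j = 2 * ∑ i, ∑ j ∈ Finset.univ.filter (fun j => i < j), f i j := by
    simp_rw [hsplit, Finset.sum_add_distrib, hswap]; ring
  rw [this] at hF
  linarith
end
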